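/- Let N : (0,1] → [0,∞) be defined by N(v) = a·c·∫_v^1 u^{-1}(1-u)^{c-1} du with a, c > 0 (the beta process tail intensity with σ = 0, up to normalization). Then for any ξ > 0, if N(v) = ξ then v ≤ exp((1 - ξ/a)/c); equivalently N^{-1}(ξ) ≤ e^{(1-ξ/a)/c}. -/

import Mathlib

/-!
Since `u⁻¹ (1 - u)^(c-1) = (1 - u)^(c-1) + (1 - u)^c / u ≤ (1 - u)^(c-1) + u⁻¹` on `(0, 1)`,
integrating over `(v, 1)` gives `N(v) ≤ a ((1 - v)^c - c log v) ≤ a (1 - c log v)`.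
Solving `ξ = N(v) ≤ a (1 - c log v)` for `log v` yields the bound.
-/

open MeasureTheory Set

lemma intervalIntegrable_one_sub_rpow {c : ℝ} (hc : 0 < c) (a b : ℝ) :
    IntervalIntegrable (fun u : ℝ => (1 - u) ^ (c - 1)) volume a b := by
  simpa using (intervalIntegral.intervalIntegrable_rpow' (a := 1 - a) (b := 1 - b)
    (r := c - 1) (by linarith)).comp_sub_left 1

lemma integral_one_sub_rpow {c : ℝ} (hc : 0 < c) (v : ℝ) :
    ∫ u in v..1, (1 - u) ^ (c - 1) = (1 - v) ^ c / c := by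
  rw [intervalIntegral.integral_comp_sub_left (fun x : ℝ => x ^ (c - 1)), sub_self,
    integral_rpow (Or.inl (by linarith)), sub_add_cancel, Real.zero_rpow hc.ne', sub_zero]

lemma inv_mul_one_sub_rpow_le {c u : ℝ} (hc : 0 ≤ c) (hu : u ∈ Ioo (0 : ℝ) 1) :
    u⁻¹ * (1 - u) ^ (c - 1) ≤ (1 - u) ^ (c - 1) + u⁻¹ := by
  obtain ⟨hu0, hu1⟩ := hu
  have h1u : 0 < 1 - u := sub_pos.mpr hu1
  have hsplit : u⁻¹ * (1 - u) ^ (c - 1) = (1 - u) ^ (c - 1) + (1 - u) ^ c * u⁻¹ := by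
    rw [Real.rpow_sub_one h1u.ne']
    field_simp
    ring
  have hpow : (1 - u) ^ c ≤ 1 := Real.rpow_le_one h1u.le (by linarith) hc
  rw [hsplit]
  gcongr
  exact mul_le_of_le_one_left (inv_pos.mpr hu0).le hpow

lemma mul_integral_inv_mul_one_sub_rpow_le {c v : ℝ} (hc : 0 < c) (hv : v ∈ Ioc (0 : ℝ) 1) :
    c * ∫ u in Ioo v 1, u⁻¹ * (1 - u) ^ (c - 1) ≤ 1 - c * Real.log v := by
  obtain ⟨hv0, hv1⟩ := hv
  have hinv : ContinuousOn (fun u : ℝ => u⁻¹) (uIcc v 1) := by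
    rw [uIcc_of_le hv1]
    exact continuousOn_inv₀.mono fun u hu => (hv0.trans_le hu.1).ne'
  have hpow := intervalIntegrable_one_sub_rpow hc v 1
  rw [← integral_Ioc_eq_integral_Ioo, ← intervalIntegral.integral_of_le hv1]
  calc c * ∫ u in v..1, u⁻¹ * (1 - u) ^ (c - 1)
      ≤ c * ∫ u in v..1, ((1 - u) ^ (c - 1) + u⁻¹) := by
        gcongr
        exact intervalIntegral.integral_mono_on_of_le_Ioo hv1 (hpow.continuousOn_mul hinv)
          (hpow.add hinv.intervalIntegrable)
          fun u hu => inv_mul_one_sub_rpow_le hc.le ⟨hv0.trans hu.1, hu.2⟩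
    _ = (1 - v) ^ c - c * Real.log v := by
        rw [intervalIntegral.integral_add hpow hinv.intervalIntegrable, integral_one_sub_rpow hc,
          integral_inv_of_pos hv0 one_pos, one_div, Real.log_inv]
        field_simp
        ring
    _ ≤ 1 - c * Real.log v := by
        gcongr
        exact Real.rpow_le_one (by linarith) (by linarith) hc.le

theorem beta_process_inverse_bound_general (a c : ℝ) (ha : 0 < a) (hc : 0 < c)
    (v : ℝ) (hv : v ∈ Set.Ioc (0:ℝ) 1) (ξ : ℝ)
    (hN : a * c * ∫ u in Set.Ioo v 1, u⁻¹ * (1 - u) ^ (c - 1) = ξ) :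
    v ≤ Real.exp ((1 - ξ / a) / c) := by
  have hξ : ξ / a ≤ 1 - c * Real.log v := by
    rw [div_le_iff₀ ha, ← hN, mul_assoc, mul_comm _ a]
    exact mul_le_mul_of_nonneg_left (mul_integral_inv_mul_one_sub_rpow_le hc hv) ha.le
  have hlog : Real.log v ≤ (1 - ξ / a) / c := by
    rw [le_div_iff₀ hc]
    linarith
  exact (Real.log_le_iff_le_exp hv.1).1 hlog

theorem beta_process_inverse_bound (a c : ℝ) (ha : 0 < a) (hc : 0 < c)
    (v : ℝ) (hv : v ∈ Set.Ioc (0:ℝ) 1) (ξ : ℝ) (hξ : 0 < ξ)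
    (hN : a * c * ∫ u in Set.Ioo v 1, u⁻¹ * (1 - u) ^ (c - 1) = ξ) :
    v ≤ Real.exp ((1 - ξ / a) / c) :=
  beta_process_inverse_bound_general a c ha hc v hv ξ hN
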